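/- Let F(w_1,...,w_N) = Σ_D Π_{k∈D} w_k where D runs over subsets of {1,...,N} with no two consecutive elements. Define G_n ∈ ℤ[a,b] by substituting w_k = a for odd k and w_k = b for even k into F(w_1,...,w_{2n+1}). Then the number of lattice points: the coefficient of a^q b^r in G_n equals C(n+1-r, q)·C(n-q, r) for q + r ≤ n, and equals 1 when (q,r)=(n+1,0), and is 0 otherwise. -/

import Mathlib

open MvPolynomial

noncomputable section

/-- `G_n ∈ ℤ[a,b]`: the independence polynomial of the path on `2n+1` vertices,
`F(w₁,…,w_{2n+1})` with `w_k = a` for odd `k` and `w_k = b` for even `k`, where the sum is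
over subsets `D ⊆ {1,…,2n+1}` with no two consecutive elements (`a = X 0`, `b = X 1`). -/
def Gpoly (n : ℕ) : MvPolynomial (Fin 2) ℤ :=
  ∑ D ∈ (Finset.Icc 1 (2 * n + 1)).powerset.filter (fun D => ∀ k ∈ D, k + 1 ∉ D),
    ∏ k ∈ D, (if k % 2 = 1 then (X 0 : MvPolynomial (Fin 2) ℤ) else X 1)

def Ppoly (m : ℕ) : MvPolynomial (Fin 2) ℤ :=
  ∑ D ∈ (Finset.Icc 1 m).powerset.filter (fun D => ∀ k ∈ D, k + 1 ∉ D),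
    ∏ k ∈ D, (if k % 2 = 1 then (X 0 : MvPolynomial (Fin 2) ℤ) else X 1)

lemma Ppoly_zero : Ppoly 0 = 1 := by
  rw [Ppoly, show Finset.Icc 1 0 = ∅ by rfl]
  rw [show (∅ : Finset ℕ).powerset.filter (fun D => ∀ k ∈ D, k + 1 ∉ D) = {∅} by decide]
  simp

lemma Ppoly_one : Ppoly 1 = 1 + X 0 := by
  rw [Ppoly]
  rw [show (Finset.Icc 1 1).powerset.filter (fun D => ∀ k ∈ D, k + 1 ∉ D) = {∅, {1}} by decide]
  rw [Finset.sum_pair (by decide)]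
  simp

lemma Ppoly_rec (m : ℕ) :
    Ppoly (m + 2) = Ppoly (m + 1) +
      (if m % 2 = 1 then (X 0 : MvPolynomial (Fin 2) ℤ) else X 1) * Ppoly m := by
  have hx : (m + 2) ∉ Finset.Icc 1 (m + 1) := by simp
  have hIcc : Finset.Icc 1 (m + 2) = insert (m + 2) (Finset.Icc 1 (m + 1)) := by
    ext x; simp only [Finset.mem_Icc, Finset.mem_insert]; omega
  rw [Ppoly, hIcc, Finset.sum_filter, Finset.sum_powerset_insert hx]
  congr 1
  · rw [Ppoly, Finset.sum_filter]
  · -- second sum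
    have step1 : ∀ t ∈ (Finset.Icc 1 (m + 1)).powerset,
        (if (∀ k ∈ insert (m+2) t, k + 1 ∉ insert (m+2) t) then
          ∏ k ∈ insert (m+2) t, (if k % 2 = 1 then (X 0 : MvPolynomial (Fin 2) ℤ) else X 1) else 0)
        = (if ((∀ k ∈ t, k + 1 ∉ t) ∧ (m+1) ∉ t) then
            (if m % 2 = 1 then (X 0 : MvPolynomial (Fin 2) ℤ) else X 1) *
              ∏ k ∈ t, (if k % 2 = 1 then (X 0 : MvPolynomial (Fin 2) ℤ) else X 1) else 0) := by
      intro t ht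
      rw [Finset.mem_powerset] at ht
      have hb : ∀ x ∈ t, 1 ≤ x ∧ x ≤ m + 1 := by
        intro x hxm; have := ht hxm; simpa [Finset.mem_Icc] using this
      have hxt : (m + 2) ∉ t := fun h => by have := hb _ h; omega
      have hcond : (∀ k ∈ insert (m+2) t, k + 1 ∉ insert (m+2) t) ↔
          ((∀ k ∈ t, k + 1 ∉ t) ∧ (m+1) ∉ t) := by
        constructor
        · intro h
          refine ⟨fun k hk hk1 =>
            h k (Finset.mem_insert_of_mem hk) (Finset.mem_insert_of_mem hk1),
            fun hm1 => h (m+1) (Finset.mem_insert_of_mem hm1) (Finset.mem_insert_self _ _)⟩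
        · rintro ⟨h1, h2⟩ k hk hk1
          rcases Finset.mem_insert.1 hk with rfl | hk
          · rcases Finset.mem_insert.1 hk1 with h | h
            · omega
            · have := hb _ h; omega
          · rcases Finset.mem_insert.1 hk1 with h | h
            · have hkm : k = m + 1 := by omega
              exact h2 (hkm ▸ hk)
            · exact h1 k hk h
      rw [if_congr hcond rfl rfl]
      split
      · rw [Finset.prod_insert hxt]
        have : (m + 2) % 2 = 1 ↔ m % 2 = 1 := by omega
        congr 1
        split <;> split <;> first | rfl | omega
      · rfl
    rw [Finset.sum_congr rfl step1]
    have hsub : (Finset.Icc 1 m).powerset ⊆ (Finset.Icc 1 (m+1)).powerset :=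
      Finset.powerset_mono.2 (Finset.Icc_subset_Icc_right (by omega))
    rw [← Finset.sum_subset hsub ?vanish]
    · rw [Ppoly, Finset.sum_filter, Finset.mul_sum]
      apply Finset.sum_congr rfl
      intro t ht
      rw [Finset.mem_powerset] at ht
      have hm1 : (m+1) ∉ t := fun h => by
        have := ht h; simp only [Finset.mem_Icc] at this; omega
      simp only [hm1, not_false_iff, and_true]
      split <;> simp
    case vanish =>
      intro t ht hnt
      rw [Finset.mem_powerset] at ht
      have hm1 : (m+1) ∈ t := by
        by_contra hm
        apply hnt
        rw [Finset.mem_powerset]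
        intro x hxmem
        have hx2 := ht hxmem
        simp only [Finset.mem_Icc] at hx2 ⊢
        have : x ≠ m + 1 := fun h => hm (h ▸ hxmem)
        omega
      simp [hm1]

def mo (q r : ℕ) : Fin 2 →₀ ℕ := Finsupp.single 0 q + Finsupp.single 1 r

lemma mo_apply0 (q r : ℕ) : mo q r 0 = q := by
  simp [mo, Finsupp.single_apply]

lemma mo_apply1 (q r : ℕ) : mo q r 1 = r := by
  simp [mo, Finsupp.single_apply]

lemma coeff_mo_X0 (q r : ℕ) (p : MvPolynomial (Fin 2) ℤ) :
    coeff (mo (q+1) r) (X 0 * p) = coeff (mo q r) p := by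
  have h : mo (q+1) r = Finsupp.single 0 1 + mo q r := by
    rw [mo, mo, show q + 1 = 1 + q by omega, Finsupp.single_add, add_assoc]
  rw [h, coeff_X_mul]

lemma coeff_mo_X0_zero (r : ℕ) (p : MvPolynomial (Fin 2) ℤ) :
    coeff (mo 0 r) (X 0 * p) = 0 := by
  rw [mul_comm, coeff_mul_X']
  rw [if_neg]
  simp [Finsupp.mem_support_iff, mo_apply0]

lemma coeff_mo_X1 (q r : ℕ) (p : MvPolynomial (Fin 2) ℤ) :
    coeff (mo q (r+1)) (X 1 * p) = coeff (mo q r) p := by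
  have h : mo q (r+1) = Finsupp.single 1 1 + mo q r := by
    rw [mo, mo, show r + 1 = 1 + r by omega, Finsupp.single_add]
    rw [← add_assoc, add_comm (Finsupp.single 0 q) (Finsupp.single 1 1), add_assoc]
  rw [h, coeff_X_mul]

lemma coeff_mo_X1_zero (q : ℕ) (p : MvPolynomial (Fin 2) ℤ) :
    coeff (mo q 0) (X 1 * p) = 0 := by
  rw [mul_comm, coeff_mul_X']
  rw [if_neg]
  simp [Finsupp.mem_support_iff, mo_apply1]

lemma coeff_mo_one (q r : ℕ) :
    coeff (mo q r) (1 : MvPolynomial (Fin 2) ℤ) = if q = 0 ∧ r = 0 then 1 else 0 := by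
  rw [coeff_one]
  by_cases h : q = 0 ∧ r = 0
  · obtain ⟨rfl, rfl⟩ := h
    rw [if_pos, if_pos ⟨rfl, rfl⟩]
    · ext i; fin_cases i <;> simp [mo_apply0, mo_apply1]
  · rw [if_neg h, if_neg]
    intro h0
    apply h
    constructor
    · have := DFunLike.congr_fun h0 0
      simpa [mo_apply0] using this.symm
    · have := DFunLike.congr_fun h0 1
      simpa [mo_apply1] using this.symm

def Af (n q r : ℕ) : ℤ :=
  if q + r ≤ n then ((n + 1 - r).choose q * (n - q).choose r : ℤ)
  else if q = n + 1 ∧ r = 0 then 1 else 0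

def Bf (n q r : ℕ) : ℤ :=
  if q + r ≤ n then ((n - r).choose q * (n - q).choose r : ℤ) else 0

lemma pascalZ (m k : ℕ) : ((m + 1).choose (k + 1) : ℤ) = m.choose k + m.choose (k + 1) := by
  exact_mod_cast Nat.choose_succ_succ m k

lemma idB (n q r : ℕ) :
    Af n q r + (if r = 0 then 0 else Bf n q (r-1)) = Bf (n+1) q r := by
  rcases r with _ | s
  · rw [if_pos rfl, add_zero]
    unfold Af Bf
    simp only [Nat.add_zero, Nat.sub_zero, and_true, Nat.choose_zero_right, Nat.cast_one,
      mul_one]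
    rcases Nat.lt_trichotomy q (n+1) with h | h | h
    · simp only [if_pos (show q ≤ n by omega), if_pos (show q ≤ n + 1 by omega)]
    · have h1 : ¬ (q ≤ n) := by omega
      simp only [if_neg h1, if_pos h, if_pos (show q ≤ n + 1 by omega), h, Nat.choose_self]
      norm_num
    · simp only [if_neg (show ¬ q ≤ n by omega), if_neg (show ¬ q = n + 1 by omega),
        if_neg (show ¬ q ≤ n + 1 by omega)]
  · rw [if_neg (Nat.succ_ne_zero s), show s + 1 - 1 = s from rfl]
    unfold Af Bf
    rcases Nat.lt_trichotomy (q + s + 1) (n + 1) with h | h | h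
    · simp only [if_pos (show q + (s+1) ≤ n by omega), if_pos (show q + s ≤ n by omega),
        if_pos (show q + (s+1) ≤ n + 1 by omega)]
      have e1 : n + 1 - (s + 1) = n - s := by omega
      have e3 : n + 1 - q = (n - q) + 1 := by omega
      rw [e1, e3, pascalZ]
      ring
    · simp only [if_neg (show ¬ q + (s+1) ≤ n by omega),
        if_neg (show ¬ (q = n + 1 ∧ s + 1 = 0) by rintro ⟨h1, h2⟩; omega),
        if_pos (show q + s ≤ n by omega), if_pos (show q + (s+1) ≤ n + 1 by omega)]
      have e1 : n - s = q := by omega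
      have e2 : n - q = s := by omega
      have e3 : n + 1 - (s + 1) = q := by omega
      have e4 : n + 1 - q = s + 1 := by omega
      rw [e1, e2, e3, e4, Nat.choose_self, Nat.choose_self, Nat.choose_self]
      norm_num
    · simp only [if_neg (show ¬ q + (s+1) ≤ n by omega),
        if_neg (show ¬ (q = n + 1 ∧ s + 1 = 0) by rintro ⟨h1, h2⟩; omega),
        if_neg (show ¬ q + s ≤ n by omega), if_neg (show ¬ q + (s+1) ≤ n + 1 by omega)]
      norm_num

lemma idA (n q r : ℕ) :
    Bf (n+1) q r + (if q = 0 then 0 else Af n (q-1) r) = Af (n+1) q r := by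
  rcases q with _ | p
  · rw [if_pos rfl, add_zero]
    unfold Af Bf
    simp only [Nat.zero_add, Nat.choose_zero_right, Nat.cast_one, one_mul, Nat.sub_zero]
    by_cases h : r ≤ n + 1
    · simp only [if_pos h]
    · simp only [if_neg h, if_neg (show ¬ (0 = n + 1 + 1 ∧ r = 0) by rintro ⟨h1, h2⟩; omega)]
  · rw [if_neg (Nat.succ_ne_zero p), show p + 1 - 1 = p from rfl]
    unfold Af Bf
    rcases Nat.lt_trichotomy (p + 1 + r) (n + 2) with h | h | h
    · simp only [if_pos (show p + 1 + r ≤ n + 1 by omega), if_pos (show p + r ≤ n by omega)]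
      have e1 : n + 1 - (p + 1) = n - p := by omega
      have e2 : n + 1 + 1 - r = (n + 1 - r) + 1 := by omega
      rw [e1, e2, pascalZ]
      ring
    · have hA : ¬ (p + r ≤ n) := by omega
      have hB : ¬ (p + 1 + r ≤ n + 1) := by omega
      simp only [if_neg hA, if_neg hB, zero_add]
      have hiff : (p + 1 = n + 1 + 1 ∧ r = 0) ↔ (p = n + 1 ∧ r = 0) := by
        constructor <;> rintro ⟨h1, h2⟩ <;> exact ⟨by omega, h2⟩
      rw [if_congr hiff rfl rfl]
    · have hA : ¬ (p + r ≤ n) := by omega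
      have hB : ¬ (p + 1 + r ≤ n + 1) := by omega
      have hs1 : ¬ (p = n + 1 ∧ r = 0) := by rintro ⟨h1, h2⟩; omega
      have hs2 : ¬ (p + 1 = n + 1 + 1 ∧ r = 0) := by rintro ⟨h1, h2⟩; omega
      simp only [if_neg hA, if_neg hB, if_neg hs1, if_neg hs2, add_zero]

lemma base_B (q r : ℕ) : coeff (mo q r) (Ppoly 0) = Bf 0 q r := by
  rw [Ppoly_zero, coeff_mo_one]
  unfold Bf
  by_cases h : q = 0 ∧ r = 0
  · obtain ⟨rfl, rfl⟩ := h
    norm_num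
  · rw [if_neg h, if_neg (by omega)]

lemma base_A (q r : ℕ) : coeff (mo q r) (Ppoly 1) = Af 0 q r := by
  rw [Ppoly_one, show (X 0 : MvPolynomial (Fin 2) ℤ) = X 0 * 1 by ring, coeff_add,
    coeff_mo_one]
  unfold Af
  rcases q with _ | p
  · rw [coeff_mo_X0_zero, add_zero]
    by_cases h : r = 0
    · subst h; norm_num
    · rw [if_neg (by omega), if_neg (by omega), if_neg (by rintro ⟨h1, h2⟩; omega)]
  · rw [coeff_mo_X0, coeff_mo_one, if_neg (by omega), zero_add]
    by_cases h : p = 0 ∧ r = 0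
    · obtain ⟨rfl, rfl⟩ := h
      norm_num
    · rw [if_neg h, if_neg (by omega), if_neg (by rintro ⟨h1, h2⟩; exact h ⟨by omega, h2⟩)]

lemma mainAB (n : ℕ) :
    (∀ q r, coeff (mo q r) (Ppoly (2*n)) = Bf n q r) ∧
      (∀ q r, coeff (mo q r) (Ppoly (2*n+1)) = Af n q r) := by
  induction n with
  | zero =>
    constructor
    · intro q r; simpa using base_B q r
    · intro q r; simpa using base_A q r
  | succ n ih =>
    obtain ⟨hB, hA⟩ := ih
    have hrecB : Ppoly (2*(n+1)) = Ppoly (2*n+1) + X 1 * Ppoly (2*n) := by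
      rw [show 2*(n+1) = 2*n + 2 by ring, Ppoly_rec, if_neg (by omega)]
    have hB' : ∀ q r, coeff (mo q r) (Ppoly (2*(n+1))) = Bf (n+1) q r := by
      intro q r
      rw [hrecB, coeff_add, hA]
      rcases r with _ | s
      · rw [coeff_mo_X1_zero]
        have := idB n q 0
        rw [if_pos rfl] at this
        exact this
      · rw [coeff_mo_X1, hB]
        have := idB n q (s+1)
        rw [if_neg (Nat.succ_ne_zero s)] at this
        exact this
    have hrecA : Ppoly (2*(n+1)+1) = Ppoly (2*(n+1)) + X 0 * Ppoly (2*n+1) := by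
      rw [show 2*(n+1)+1 = (2*n+1) + 2 by ring, Ppoly_rec, if_pos (by omega),
        show 2*n+1+1 = 2*(n+1) by ring]
    refine ⟨hB', fun q r => ?_⟩
    rw [hrecA, coeff_add, hB']
    rcases q with _ | p
    · rw [coeff_mo_X0_zero]
      have := idA n 0 r
      rw [if_pos rfl] at this
      exact this
    · rw [coeff_mo_X0, hA]
      have := idA n (p+1) r
      rw [if_neg (Nat.succ_ne_zero p)] at this
      exact this

/-- The coefficient of `a^q b^r` in `G_n` equals `C(n+1-r,q)·C(n-q,r)` for `q + r ≤ n`,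
equals `1` for `(q,r) = (n+1,0)`, and is `0` otherwise. -/
theorem stmt16 (n q r : ℕ) :
    MvPolynomial.coeff (Finsupp.single 0 q + Finsupp.single 1 r) (Gpoly n) =
      (if q + r ≤ n then ((n + 1 - r).choose q * (n - q).choose r : ℤ)
        else if q = n + 1 ∧ r = 0 then 1 else 0) := by
  have h := (mainAB n).2 q r
  unfold Af at h
  exact h

end
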